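/- Let k ∈ {−1,0,1}, ε, n ∈ {0,1} with εn = εk = 0, and let a, b : ℝ → (0,∞) be arbitrary functions. Let Ψ : ℝ⁴ → ℝ⁴ be the map Ψ(t,r,φ,z) = (t, z + nkφ, r e^{−εz}, φ). Then Ψ pulls g_comp back to g_cyl: for every point q = (t,r,φ,z) and all vectors u, v ∈ ℝ⁴, g_comp(Ψ(q))(DΨ_q u, DΨ_q v) = g_cyl(q)(u, v), where DΨ_q denotes the (Fréchet) derivative of Ψ at q. In particular the compact LRS line element −dt² + a²(dx + nF dw)² + b²e^{2εx}(dy² + Σ²dw²) and the cylindrical-coordinate line element −dt² + a²(dz + n(F+k)dφ)² + b²[(dr − εr dz)² + Σ²dφ²] represent the same metric. -/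

import Mathlib

open Real

/-- `Σ(y,k)`: `sin y` for `k = 1`, `y` for `k = 0`, `sinh y` for `k = −1`. -/
noncomputable def Sig (k y : ℝ) : ℝ :=
  if k = 1 then Real.sin y else if k = 0 then y else Real.sinh y

/-- `F(y,k)`: `−cos y` for `k = 1`, `y²/2` for `k = 0`, `cosh y` for `k = −1`. -/
noncomputable def Ffun (k y : ℝ) : ℝ :=
  if k = 1 then -Real.cos y else if k = 0 then y ^ 2 / 2 else Real.cosh y

/-- Coefficient matrix of the compact LRS line element
`−dt² + a²(dx + nF(y,k)dw)² + b²e^{2εx}(dy² + Σ(y,k)²dw²)` in coordinates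
`(t,x,y,w) = (q 0, q 1, q 2, q 3)`. -/
noncomputable def gcomp (k ε n : ℝ) (a b : ℝ → ℝ) (q : Fin 4 → ℝ) :
    Matrix (Fin 4) (Fin 4) ℝ :=
  !![-1, 0, 0, 0;
     0, (a (q 0)) ^ 2, 0, (a (q 0)) ^ 2 * n * Ffun k (q 2);
     0, 0, (b (q 0)) ^ 2 * Real.exp (2 * ε * q 1), 0;
     0, (a (q 0)) ^ 2 * n * Ffun k (q 2), 0,
       (a (q 0)) ^ 2 * (n * Ffun k (q 2)) ^ 2 +
         (b (q 0)) ^ 2 * Real.exp (2 * ε * q 1) * (Sig k (q 2)) ^ 2]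

/-- Coefficient matrix of the cylindrical LRS line element
`−dt² + a²(dz + n(F(r,k)+k)dφ)² + b²[(dr − εr dz)² + Σ(r,k)²dφ²]` in coordinates
`(t,r,φ,z) = (q 0, q 1, q 2, q 3)`. -/
noncomputable def gcyl (k ε n : ℝ) (a b : ℝ → ℝ) (q : Fin 4 → ℝ) :
    Matrix (Fin 4) (Fin 4) ℝ :=
  !![-1, 0, 0, 0;
     0, (b (q 0)) ^ 2, 0, -ε * q 1 * (b (q 0)) ^ 2;
     0, 0, (a (q 0)) ^ 2 * (n * (Ffun k (q 1) + k)) ^ 2 +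
       (b (q 0)) ^ 2 * (Sig k (q 1)) ^ 2,
       (a (q 0)) ^ 2 * n * (Ffun k (q 1) + k);
     0, -ε * q 1 * (b (q 0)) ^ 2, (a (q 0)) ^ 2 * n * (Ffun k (q 1) + k),
       (a (q 0)) ^ 2 + ε ^ 2 * (q 1) ^ 2 * (b (q 0)) ^ 2]

/-- The coordinate change `Ψ(t,r,φ,z) = (t, z + nkφ, r e^{−εz}, φ)`. -/
noncomputable def Psi (k ε n : ℝ) : (Fin 4 → ℝ) → (Fin 4 → ℝ) := fun q =>
  ![q 0, q 3 + n * k * q 2, q 1 * Real.exp (-(ε * q 3)), q 2]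


/-! With `x = z + nkφ`, `y = r e^{−εz}`, `w = φ`, the pullback has coefficient matrix `Jᵀ g_comp J`
for the Jacobian `J` of `Ψ`, so everything reduces to a matrix identity. For `ε = 0` it is the
observation `dx + nF dw = dz + n(F + k) dφ`. For `ε ≠ 0` the constraints force `n = k = 0`; then
`dy = e^{−εz}(dr − εr dz)` and `Σ(y) = y = r e^{−εz}`, and the factor `e^{2εx} = e^{2εz}` cancels. -/

open Matrix

theorem Matrix.mulVec_dotProduct_mulVec_mulVec {ι κ R : Type*} [Fintype ι] [Fintype κ]
    [CommSemiring R] (J : Matrix ι κ R) (G : Matrix ι ι R) (u v : κ → R) :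
    J *ᵥ u ⬝ᵥ G *ᵥ (J *ᵥ v) = u ⬝ᵥ (Jᵀ * G * J) *ᵥ v := by
  rw [mulVec_mulVec, dotProduct_mulVec, dotProduct_mulVec, ← vecMul_transpose, vecMul_vecMul,
    Matrix.mul_assoc]

noncomputable def jacobianPsi (k ε n : ℝ) (q : Fin 4 → ℝ) : Matrix (Fin 4) (Fin 4) ℝ :=
  !![1, 0, 0, 0;
     0, 0, n * k, 1;
     0, Real.exp (-(ε * q 3)), 0, -(ε * q 1 * Real.exp (-(ε * q 3)));
     0, 0, 1, 0]

theorem hasFDerivAt_Psi (k ε n : ℝ) (q : Fin 4 → ℝ) :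
    HasFDerivAt (Psi k ε n) (Matrix.toLin' (jacobianPsi k ε n q)).toContinuousLinearMap q := by
  refine hasFDerivAt_pi'.2 fun i => ?_
  fin_cases i
  · refine (hasFDerivAt_apply 0 q).congr_fderiv ?_
    ext u; simp [jacobianPsi, dotProduct, Fin.sum_univ_four]
  · refine ((hasFDerivAt_apply 3 q).add
      ((hasFDerivAt_apply 2 q).const_mul (n * k))).congr_fderiv ?_
    ext u; simp [jacobianPsi, dotProduct, Fin.sum_univ_four]; ring
  · refine ((hasFDerivAt_apply 1 q).mul
      ((hasFDerivAt_apply 3 q).const_mul ε).neg.exp).congr_fderiv ?_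
    ext u; simp [jacobianPsi, dotProduct, Fin.sum_univ_four]; ring
  · refine (hasFDerivAt_apply 2 q).congr_fderiv ?_
    ext u; simp [jacobianPsi, dotProduct, Fin.sum_univ_four]

theorem fderiv_Psi_apply (k ε n : ℝ) (q u : Fin 4 → ℝ) :
    fderiv ℝ (Psi k ε n) q u = jacobianPsi k ε n q *ᵥ u := by
  simp [(hasFDerivAt_Psi k ε n q).fderiv]

theorem jacobianPsi_transpose_mul_gcomp_mul (k ε n : ℝ) (hεn : ε * n = 0) (hεk : ε * k = 0)
    (a b : ℝ → ℝ) (q : Fin 4 → ℝ) :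
    (jacobianPsi k ε n q)ᵀ * gcomp k ε n a b (Psi k ε n q) * jacobianPsi k ε n q =
      gcyl k ε n a b q := by
  by_cases hε : ε = 0
  · subst hε
    ext i j
    fin_cases i <;> fin_cases j <;>
      simp [jacobianPsi, gcomp, gcyl, Psi, Matrix.mul_apply, Fin.sum_univ_four] <;> ring
  · obtain rfl : n = 0 := (mul_eq_zero.1 hεn).resolve_left hε
    obtain rfl : k = 0 := (mul_eq_zero.1 hεk).resolve_left hε
    have hexp : rexp (2 * ε * q 3) = rexp (ε * q 3) ^ 2 := by
      rw [← Real.exp_nat_mul]; ring_nf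
    ext i j
    fin_cases i <;> fin_cases j <;>
      simp [jacobianPsi, gcomp, gcyl, Psi, Matrix.mul_apply, Fin.sum_univ_four, Sig, hexp,
        Real.exp_neg] <;> field_simp

theorem compact_to_cylindrical_pullback_general (k ε n : ℝ)
    (hεn : ε * n = 0) (hεk : ε * k = 0)
    (a b : ℝ → ℝ) :
    ∀ q u v : Fin 4 → ℝ,
      dotProduct (fderiv ℝ (Psi k ε n) q u)
          ((gcomp k ε n a b (Psi k ε n q)).mulVec (fderiv ℝ (Psi k ε n) q v)) =
        dotProduct u ((gcyl k ε n a b q).mulVec v) := by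
  intro q u v
  rw [fderiv_Psi_apply, fderiv_Psi_apply, Matrix.mulVec_dotProduct_mulVec_mulVec,
    jacobianPsi_transpose_mul_gcomp_mul k ε n hεn hεk]

/-- `Ψ` pulls the compact LRS metric back to the cylindrical one:
`g_comp(Ψ(q))(DΨ_q u, DΨ_q v) = g_cyl(q)(u,v)` for all `q, u, v`, i.e. the two line
elements represent the same metric. -/
theorem compact_to_cylindrical_pullback (k ε n : ℝ)
    (hk : k = -1 ∨ k = 0 ∨ k = 1) (hε : ε = 0 ∨ ε = 1) (hn : n = 0 ∨ n = 1)
    (hεn : ε * n = 0) (hεk : ε * k = 0)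
    (a b : ℝ → ℝ) (hapos : ∀ t, 0 < a t) (hbpos : ∀ t, 0 < b t) :
    ∀ q u v : Fin 4 → ℝ,
      dotProduct (fderiv ℝ (Psi k ε n) q u)
          ((gcomp k ε n a b (Psi k ε n q)).mulVec (fderiv ℝ (Psi k ε n) q v)) =
        dotProduct u ((gcyl k ε n a b q).mulVec v) :=
  compact_to_cylindrical_pullback_general k ε n hεn hεk a b
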